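/- arXiv:0805.3638 — 3 statements merged into one kernel-verified Lean document; each statement's English description precedes it below -/
import Mathlib

section
/- Suppose that for every probability vector c on S and every permutation σ of S one has D(ν ‖ μ_{c∘σ}) = D(ν ‖ μ_c). Then the uniform mixture minimizes the reverse divergence: for every probability vector c on S, D(ν ‖ μ_u) ≤ D(ν ‖ μ_c), where u is the uniform probability vector u(x) = 1/|S| for all x ∈ S. -/
open MeasureTheory
open scoped ENNReal

open scoped Classical in
/-- Kullback–Leibler divergence between two measures, valued in `[0,∞]`. -/
noncomputable def klDiv {𝒵 : Type*} [MeasurableSpace 𝒵] (μ ν : Measure 𝒵) : ℝ≥0∞ :=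
  if μ ≪ ν ∧ Integrable (llr μ ν) μ then ENNReal.ofReal (∫ z, llr μ ν z ∂μ) else ⊤

/-- The mixture measure `μ_c = ∑ x, c x • μ x` associated with a (probability) vector `c`. -/
noncomputable def mix {S 𝒵 : Type*} [Fintype S] [MeasurableSpace 𝒵]
    (μ : S → Measure 𝒵) (c : S → ℝ) : Measure 𝒵 :=
  ∑ x : S, ENNReal.ofReal (c x) • μ x

/-- A probability vector on a finite set. -/
def IsProbVec {S : Type*} [Fintype S] (c : S → ℝ) : Prop :=
  (∀ x, 0 ≤ c x) ∧ ∑ x : S, c x = 1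

/-! The reverse divergence `c ↦ D(ν ‖ μ_c)` is convex: `ν`-a.e. the log-likelihood ratio
`log dν/dμ_c = -log dμ_c/dν` is convex in `c` because `-log` is, and it is bounded below by
`1 - dμ_c/dν`, which is integrable. Averaging `c ∘ σ` over all permutations `σ` of `S` gives the
uniform vector, so `D(ν ‖ μ_u)` is at most the average of the `D(ν ‖ μ_{c∘σ})`, all of which equal
`D(ν ‖ μ_c)` by hypothesis. -/

section Permutations

variable {S : Type*} [Fintype S] [DecidableEq S]

theorem card_smul_sum_perm_apply {M : Type*} [AddCommMonoid M] (f : S → M) (x : S) :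
    Fintype.card S • ∑ σ : Equiv.Perm S, f (σ x) = Fintype.card (Equiv.Perm S) • ∑ y, f y := by
  have hconst (y : S) : ∑ σ : Equiv.Perm S, f (σ y) = ∑ σ : Equiv.Perm S, f (σ x) := by
    simpa using Equiv.sum_comp (Equiv.mulRight (Equiv.swap y x)) (fun σ => f (σ x))
  calc Fintype.card S • ∑ σ : Equiv.Perm S, f (σ x)
      = ∑ y : S, ∑ σ : Equiv.Perm S, f (σ y) := by simp [hconst]
    _ = ∑ σ : Equiv.Perm S, ∑ y, f (σ y) := Finset.sum_comm
    _ = Fintype.card (Equiv.Perm S) • ∑ y, f y := by simp [Equiv.sum_comp]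

theorem uniform_eq_sum_perm_smul {c : S → ℝ} (hc : ∑ x, c x = 1) :
    (fun _ => 1 / (Fintype.card S : ℝ)) =
      ∑ σ : Equiv.Perm S, (Fintype.card (Equiv.Perm S) : ℝ)⁻¹ • fun x => c (σ x) := by
  ext x
  have hS : (Fintype.card S : ℝ) ≠ 0 := by
    have : Nonempty S := ⟨x⟩
    positivity
  have h := card_smul_sum_perm_apply c x
  simp only [nsmul_eq_mul, hc, mul_one] at h
  simp only [Finset.sum_apply, Pi.smul_apply, smul_eq_mul, ← Finset.mul_sum]
  field_simp
  linarith

end Permutations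

section Convexity

open Real

variable {α : Type*} [MeasurableSpace α]

theorem klDiv_ne_top_iff {μ ν : Measure α} :
    klDiv μ ν ≠ ⊤ ↔ μ ≪ ν ∧ Integrable (llr μ ν) μ := by
  unfold klDiv; split_ifs with h <;> simp [h]

theorem klDiv_of_ac_of_integrable {μ ν : Measure α} (hac : μ ≪ ν)
    (hint : Integrable (llr μ ν) μ) :
    klDiv μ ν = ENNReal.ofReal (∫ z, llr μ ν z ∂μ) :=
  if_pos ⟨hac, hint⟩

theorem llr_eq_neg_log_toReal_rnDeriv {μ ν : Measure α} [SigmaFinite μ] [SigmaFinite ν]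
    (h : ν ≪ μ) : llr ν μ =ᵐ[ν] fun z => -log (μ.rnDeriv ν z).toReal := by
  filter_upwards [neg_llr h] with z hz
  change llr ν μ z = -llr μ ν z
  rw [← hz, Pi.neg_apply, neg_neg]

theorem toReal_rnDeriv_pos {μ ν : Measure α} [SigmaFinite μ] [SigmaFinite ν] (h : ν ≪ μ) :
    ∀ᵐ z ∂ν, 0 < (μ.rnDeriv ν z).toReal := by
  filter_upwards [Measure.rnDeriv_pos' h, Measure.rnDeriv_lt_top μ ν] with z hpos hlt
  exact ENNReal.toReal_pos hpos.ne' hlt.ne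

theorem rnDeriv_finset_sum {ι : Type*} (s : Finset ι) (m : ι → Measure α)
    [∀ i, IsFiniteMeasure (m i)] (ν : Measure α) [SigmaFinite ν] :
    (∑ i ∈ s, m i).rnDeriv ν =ᵐ[ν] ∑ i ∈ s, (m i).rnDeriv ν := by
  induction s using Finset.cons_induction with
  | empty => simp [Measure.rnDeriv_zero ν]
  | cons a s ha ih =>
    rw [Finset.sum_cons, Finset.sum_cons]
    filter_upwards [Measure.rnDeriv_add (m a) (∑ i ∈ s, m i) ν, ih] with z hadd hz
    simp [hadd, hz]

variable {ν : Measure α} [IsFiniteMeasure ν] {ι : Type*} {s : Finset ι} {w : ι → ℝ}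
  {m : ι → Measure α} [∀ i, IsFiniteMeasure (m i)]

instance isFiniteMeasure_finset_sum_ofReal_smul :
    IsFiniteMeasure (∑ i ∈ s, ENNReal.ofReal (w i) • m i) := by
  constructor
  rw [Measure.finsetSum_apply]
  exact ENNReal.sum_lt_top.2 fun i _ =>
    ENNReal.mul_lt_top ENNReal.ofReal_lt_top (measure_lt_top _ _)

theorem toReal_rnDeriv_finset_sum_smul (hw : ∀ i ∈ s, 0 ≤ w i) :
    ∀ᵐ z ∂ν, ((∑ i ∈ s, ENNReal.ofReal (w i) • m i).rnDeriv ν z).toReal =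
      ∑ i ∈ s, w i * ((m i).rnDeriv ν z).toReal := by
  have (i : ι) : IsFiniteMeasure (ENNReal.ofReal (w i) • m i) :=
    (m i).smul_finite ENNReal.ofReal_ne_top
  have hsmul : ∀ᵐ z ∂ν, ∀ i ∈ s, (ENNReal.ofReal (w i) • m i).rnDeriv ν z =
      ENNReal.ofReal (w i) * (m i).rnDeriv ν z :=
    (Filter.eventually_all_finset s).2 fun i _ =>
      Measure.rnDeriv_smul_left_of_ne_top _ _ ENNReal.ofReal_ne_top
  have hfin : ∀ᵐ z ∂ν, ∀ i ∈ s, (m i).rnDeriv ν z < ⊤ :=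
    (Filter.eventually_all_finset s).2 fun i _ => Measure.rnDeriv_lt_top _ _
  filter_upwards [rnDeriv_finset_sum s (fun i => ENNReal.ofReal (w i) • m i) ν, hsmul, hfin]
    with z hsum hsmul hfin
  rw [hsum, Finset.sum_apply, ENNReal.toReal_sum fun i hi => by
    simp [hsmul i hi, ENNReal.mul_eq_top, (hfin i hi).ne]]
  refine Finset.sum_congr rfl fun i hi => ?_
  rw [hsmul i hi, ENNReal.toReal_mul, ENNReal.toReal_ofReal (hw i hi)]

theorem llr_finset_sum_smul_le (hw : ∀ i ∈ s, 0 ≤ w i) (hw1 : ∑ i ∈ s, w i = 1)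
    (hac : ν ≪ ∑ i ∈ s, ENNReal.ofReal (w i) • m i) (hac_i : ∀ i ∈ s, ν ≪ m i) :
    ∀ᵐ z ∂ν, llr ν (∑ i ∈ s, ENNReal.ofReal (w i) • m i) z ≤ ∑ i ∈ s, w i * llr ν (m i) z := by
  have hllr : ∀ᵐ z ∂ν, ∀ i ∈ s, llr ν (m i) z = -log ((m i).rnDeriv ν z).toReal :=
    (Filter.eventually_all_finset s).2 fun i hi => llr_eq_neg_log_toReal_rnDeriv (hac_i i hi)
  have hpos : ∀ᵐ z ∂ν, ∀ i ∈ s, 0 < ((m i).rnDeriv ν z).toReal :=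
    (Filter.eventually_all_finset s).2 fun i hi => toReal_rnDeriv_pos (hac_i i hi)
  filter_upwards [llr_eq_neg_log_toReal_rnDeriv hac, toReal_rnDeriv_finset_sum_smul (m := m) hw,
    hllr, hpos] with z hmix hdens hllr hpos
  calc llr ν (∑ i ∈ s, ENNReal.ofReal (w i) • m i) z
      = -log (∑ i ∈ s, w i * ((m i).rnDeriv ν z).toReal) := by rw [hmix, hdens]
    _ ≤ -∑ i ∈ s, w i * log ((m i).rnDeriv ν z).toReal :=
      neg_le_neg (strictConcaveOn_log_Ioi.concaveOn.le_map_sum hw hw1 hpos)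
    _ = ∑ i ∈ s, w i * llr ν (m i) z := by
      rw [← Finset.sum_neg_distrib]
      exact Finset.sum_congr rfl fun i hi => by rw [hllr i hi]; ring

theorem integrable_llr_of_ae_le {μ : Measure α} [IsFiniteMeasure μ] (h : ν ≪ μ) {g : α → ℝ}
    (hg : Integrable g ν) (hle : ∀ᵐ z ∂ν, llr ν μ z ≤ g z) : Integrable (llr ν μ) ν := by
  have hdens : Integrable (fun z => (μ.rnDeriv ν z).toReal) ν := Measure.integrable_toReal_rnDeriv
  refine Integrable.mono' (((integrable_const 1).sub hdens).abs.add hg.abs)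
    (measurable_llr ν μ).aestronglyMeasurable ?_
  -- `-log x ≥ 1 - x` gives the integrable lower bound `1 - dμ/dν`.
  filter_upwards [hle, llr_eq_neg_log_toReal_rnDeriv h, toReal_rnDeriv_pos h] with z hup hllr hpos
  have hlow : 1 - (μ.rnDeriv ν z).toReal ≤ llr ν μ z := by
    rw [hllr]; linarith [log_le_sub_one_of_pos hpos]
  exact (abs_le_max_abs_abs hlow hup).trans
    (max_le_add_of_nonneg (abs_nonneg _) (abs_nonneg _))

theorem klDiv_finset_sum_smul_le_of_pos (hw : ∀ i ∈ s, 0 < w i) (hw1 : ∑ i ∈ s, w i = 1) :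
    klDiv ν (∑ i ∈ s, ENNReal.ofReal (w i) • m i) ≤
      ∑ i ∈ s, ENNReal.ofReal (w i) * klDiv ν (m i) := by
  by_cases htop : ∃ i ∈ s, klDiv ν (m i) = ⊤
  · obtain ⟨i, hi, hi_top⟩ := htop
    calc _ ≤ ENNReal.ofReal (w i) * klDiv ν (m i) := by
          rw [hi_top, ENNReal.mul_top (ENNReal.ofReal_pos.2 (hw i hi)).ne']
          exact le_top
      _ ≤ _ := Finset.single_le_sum (f := fun i => ENNReal.ofReal (w i) * klDiv ν (m i))
          (fun _ _ => bot_le) hi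
  push Not at htop
  have hfin (i : ι) (hi : i ∈ s) := klDiv_ne_top_iff.1 (htop i hi)
  obtain ⟨i₀, hi₀⟩ : s.Nonempty := Finset.nonempty_of_sum_ne_zero (hw1 ▸ one_ne_zero)
  have hac : ν ≪ ∑ i ∈ s, ENNReal.ofReal (w i) • m i := (hfin i₀ hi₀).1.trans <|
    Measure.AbsolutelyContinuous.mk fun t _ ht => by
      rw [Measure.finsetSum_apply, Finset.sum_eq_zero_iff] at ht
      simpa [(hw i₀ hi₀).not_ge] using ht i₀ hi₀
  have hint_i (i : ι) (hi : i ∈ s) : Integrable (fun z => w i * llr ν (m i) z) ν :=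
    (hfin i hi).2.const_mul _
  have hle := llr_finset_sum_smul_le (fun i hi => (hw i hi).le) hw1 hac fun i hi => (hfin i hi).1
  have hint := integrable_llr_of_ae_le hac (integrable_finsetSum s hint_i) hle
  rw [klDiv_of_ac_of_integrable hac hint]
  calc ENNReal.ofReal (∫ z, llr ν (∑ i ∈ s, ENNReal.ofReal (w i) • m i) z ∂ν)
      ≤ ENNReal.ofReal (∑ i ∈ s, w i * ∫ z, llr ν (m i) z ∂ν) := by
        refine ENNReal.ofReal_le_ofReal ((integral_mono_ae hint (integrable_finsetSum s hint_i)
          hle).trans_eq ?_)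
        rw [integral_finsetSum s hint_i]
        simp only [integral_const_mul]
    _ ≤ ∑ i ∈ s, ENNReal.ofReal (w i * ∫ z, llr ν (m i) z ∂ν) :=
        Finset.le_sum_of_subadditive _ ENNReal.ofReal_zero.le (fun _ _ => ENNReal.ofReal_add_le)
          _ _
    _ = ∑ i ∈ s, ENNReal.ofReal (w i) * klDiv ν (m i) :=
        Finset.sum_congr rfl fun i hi => by
          rw [ENNReal.ofReal_mul (hw i hi).le,
            klDiv_of_ac_of_integrable (hfin i hi).1 (hfin i hi).2]

theorem klDiv_finset_sum_smul_le (hw : ∀ i ∈ s, 0 ≤ w i) (hw1 : ∑ i ∈ s, w i = 1) :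
    klDiv ν (∑ i ∈ s, ENNReal.ofReal (w i) • m i) ≤
      ∑ i ∈ s, ENNReal.ofReal (w i) * klDiv ν (m i) := by
  classical
  have hzero (i : ι) (h : ¬0 < w i) : ENNReal.ofReal (w i) = 0 :=
    ENNReal.ofReal_eq_zero.2 (not_lt.1 h)
  have hmeas : ∑ i ∈ s with 0 < w i, ENNReal.ofReal (w i) • m i =
      ∑ i ∈ s, ENNReal.ofReal (w i) • m i :=
    Finset.sum_filter_of_ne fun i _ h => by_contra fun hi => h (by rw [hzero i hi, zero_smul])
  have hdiv : ∑ i ∈ s with 0 < w i, ENNReal.ofReal (w i) * klDiv ν (m i) =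
      ∑ i ∈ s, ENNReal.ofReal (w i) * klDiv ν (m i) :=
    Finset.sum_filter_of_ne fun i _ h => by_contra fun hi => h (by rw [hzero i hi, zero_mul])
  have hweight : ∑ i ∈ s with 0 < w i, w i = 1 :=
    hw1 ▸ Finset.sum_filter_of_ne fun i hi h => (hw i hi).lt_of_ne' h
  rw [← hmeas, ← hdiv]
  exact klDiv_finset_sum_smul_le_of_pos (fun i hi => (Finset.mem_filter.1 hi).2) hweight

end Convexity

section Mixtures

variable {S 𝒵 : Type*} [Fintype S] [MeasurableSpace 𝒵]

instance isFiniteMeasure_mix (μ : S → Measure 𝒵) [∀ x, IsFiniteMeasure (μ x)] (c : S → ℝ) :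
    IsFiniteMeasure (mix μ c) := by
  unfold mix; infer_instance

theorem mix_finset_sum_smul {ι : Type*} (μ : S → Measure 𝒵) (s : Finset ι) {w : ι → ℝ}
    {c : ι → S → ℝ} (hw : ∀ i ∈ s, 0 ≤ w i) (hc : ∀ i ∈ s, ∀ x, 0 ≤ c i x) :
    mix μ (∑ i ∈ s, w i • c i) = ∑ i ∈ s, ENNReal.ofReal (w i) • mix μ (c i) := by
  simp only [mix, Finset.sum_apply, Pi.smul_apply, smul_eq_mul, Finset.smul_sum, smul_smul]
  rw [Finset.sum_comm]
  refine Finset.sum_congr rfl fun x _ => ?_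
  rw [ENNReal.ofReal_sum_of_nonneg fun i hi => mul_nonneg (hw i hi) (hc i hi x), Finset.sum_smul]
  exact Finset.sum_congr rfl fun i hi => by rw [ENNReal.ofReal_mul (hw i hi)]

end Mixtures

theorem uniform_mix_minimizes_klDiv_right_general {S 𝒵 : Type*} [Fintype S]
    [MeasurableSpace 𝒵] (μ : S → Measure 𝒵) (ν : Measure 𝒵)
    [∀ x, IsProbabilityMeasure (μ x)] [IsProbabilityMeasure ν]
    (hperm : ∀ (c : S → ℝ), IsProbVec c → ∀ σ : Equiv.Perm S,
      klDiv ν (mix μ (fun x => c (σ x))) = klDiv ν (mix μ c)) :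
    ∀ (c : S → ℝ), IsProbVec c →
      klDiv ν (mix μ (fun _ => 1 / (Fintype.card S : ℝ))) ≤ klDiv ν (mix μ c) := by
  classical
  intro c hc
  set w : Equiv.Perm S → ℝ := fun _ => (Fintype.card (Equiv.Perm S) : ℝ)⁻¹
  have hw0 : ∀ σ ∈ Finset.univ, 0 ≤ w σ := fun _ _ => by positivity
  have hw1 : ∑ σ, w σ = 1 := by simp [w]
  rw [uniform_eq_sum_perm_smul hc.2, mix_finset_sum_smul μ _ hw0 fun σ _ x => hc.1 (σ x)]
  calc _ ≤ ∑ σ, ENNReal.ofReal (w σ) * klDiv ν (mix μ fun x => c (σ x)) :=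
        klDiv_finset_sum_smul_le hw0 hw1
    _ = klDiv ν (mix μ c) := by
        simp_rw [hperm c hc]
        rw [← Finset.sum_mul, ← ENNReal.ofReal_sum_of_nonneg hw0, hw1, ENNReal.ofReal_one, one_mul]

theorem uniform_mix_minimizes_klDiv_right {S 𝒵 : Type*} [Fintype S] [Nonempty S]
    [MeasurableSpace 𝒵] (μ : S → Measure 𝒵) (ν : Measure 𝒵)
    [∀ x, IsProbabilityMeasure (μ x)] [IsProbabilityMeasure ν]
    (hperm : ∀ (c : S → ℝ), IsProbVec c → ∀ σ : Equiv.Perm S,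
      klDiv ν (mix μ (fun x => c (σ x))) = klDiv ν (mix μ c)) :
    ∀ (c : S → ℝ), IsProbVec c →
      klDiv ν (mix μ (fun _ => 1 / (Fintype.card S : ℝ))) ≤ klDiv ν (mix μ c) :=
  uniform_mix_minimizes_klDiv_right_general μ ν hperm
end

section
/- For all integers s ≥ 1 and t ≥ 1, the maximized partial likelihood ratios are submultiplicative: Q(0, s+t) ≤ Q(0, s) · Q(s, t). -/
open Finset

/-- The weight of a trajectory `t` of length `n` (observations shifted by `m`):
`∏_{i=1}^{n} r(m+i, t_i) · ∏_{i=2}^{n} a(t_{i−1}, t_i)` (0-indexed in Lean). -/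
noncomputable def pathVal {S : Type*} [Fintype S] (a : S → S → ℝ) (r : ℕ → S → ℝ)
    (m n : ℕ) (t : Fin n → S) : ℝ :=
  (∏ i : Fin n, r (m + 1 + (i : ℕ)) (t i)) *
    ∏ i : Fin n, (if h : (i : ℕ) + 1 < n then a (t i) (t ⟨(i : ℕ) + 1, h⟩) else 1)

open scoped Classical in
/-- `q m n x`: sum of the weights of all trajectories of length `n` starting at `x`,
i.e. `∑_{(x₂,…,x_n)} r(m+1, x) ∏_{i=2}^n a(x_{i−1},x_i) r(m+i, x_i)`. -/
noncomputable def q {S : Type*} [Fintype S] (a : S → S → ℝ) (r : ℕ → S → ℝ)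
    (m n : ℕ) (x : S) : ℝ :=
  if h : 0 < n then
    ∑ t ∈ Finset.univ.filter (fun t : Fin n → S => t ⟨0, h⟩ = x), pathVal a r m n t
  else 0

/-- `Q m n = max_{x∈S} q(m,n,x)`. -/
noncomputable def Q {S : Type*} [Fintype S] [Nonempty S] (a : S → S → ℝ) (r : ℕ → S → ℝ)
    (m n : ℕ) : ℝ :=
  Finset.univ.sup' Finset.univ_nonempty (q a r m n)

/-- The trajectory-mixture likelihood ratio
`Λ_k = ∑_{(x₁,…,x_k)∈S^k} π(x₁) (∏_{i=2}^k a(x_{i−1},x_i)) ∏_{i=1}^k r(i,x_i)`. -/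
noncomputable def Lam {S : Type*} [Fintype S] (a : S → S → ℝ) (π : S → ℝ)
    (r : ℕ → S → ℝ) (k : ℕ) : ℝ :=
  if h : 0 < k then ∑ t : Fin k → S, π (t ⟨0, h⟩) * pathVal a r 0 k t else 0


section Aux
variable {S : Type*} [Fintype S]

lemma q_one (a : S → S → ℝ) (r : ℕ → S → ℝ) (m : ℕ) (x : S) :
    q a r m 1 x = r (m + 1) x := by
  classical
  unfold q
  rw [dif_pos Nat.one_pos, Finset.sum_filter]
  rw [Fintype.sum_eq_single (fun _ : Fin 1 => x) ?_]
  · simp [pathVal]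
  · intro t ht
    have hne : t ⟨0, Nat.one_pos⟩ ≠ x := by
      intro h; apply ht; funext i
      have : i = ⟨0, Nat.one_pos⟩ := Subsingleton.elim _ _
      rw [this, h]
    exact if_neg hne

lemma pathVal_cons (a : S → S → ℝ) (r : ℕ → S → ℝ) {n : ℕ} (hn : 0 < n)
    (m : ℕ) (x : S) (v : Fin n → S) :
    pathVal a r m (n + 1) (Fin.cons x v) =
      r (m + 1) x * (a x (v ⟨0, hn⟩) * pathVal a r (m + 1) n v) := by
  unfold pathVal
  rw [Fin.prod_univ_succ, Fin.prod_univ_succ]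
  simp only [Fin.cons_zero, Fin.cons_succ, Fin.val_succ, Fin.val_zero]
  have e1 : (∏ i : Fin n, r (m+1+((i:ℕ)+1)) (v i)) = ∏ i : Fin n, r (m+1+1+(i:ℕ)) (v i) :=
    Finset.prod_congr rfl fun i _ => by congr 1; omega
  have e2 : (∏ i : Fin n,
      if h : (i:ℕ) + 1 + 1 < n + 1 then a (v i) ((Fin.cons x v : Fin (n+1) → S) ⟨(i:ℕ)+1+1, h⟩) else 1)
        = ∏ i : Fin n, (if h : (i:ℕ) + 1 < n then a (v i) (v ⟨(i:ℕ)+1, h⟩) else 1) := by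
    refine Finset.prod_congr rfl fun i _ => ?_
    by_cases hlt : (i:ℕ) + 1 < n
    · rw [dif_pos (show (i:ℕ)+1+1 < n+1 by omega), dif_pos hlt]
      congr 1
    · rw [dif_neg (by omega), dif_neg hlt]
  rw [e1, e2, dif_pos (show 0+1 < n+1 by omega)]
  have e0 : (Fin.cons x v : Fin (n+1) → S) (⟨0+1, show 0+1 < n+1 by omega⟩ : Fin (n+1)) = v ⟨0, hn⟩ := rfl
  rw [e0, Nat.add_zero]
  ring

lemma q_succ (a : S → S → ℝ) (r : ℕ → S → ℝ) {n : ℕ} (hn : 0 < n) (m : ℕ) (x : S) :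
    q a r m (n + 1) x = r (m + 1) x * ∑ y : S, a x y * q a r (m + 1) n y := by
  classical
  have h0 : (0:ℕ) < n + 1 := Nat.succ_pos n
  rw [q, dif_pos h0]
  have hsum : (∑ w ∈ Finset.univ.filter (fun w : Fin (n+1) → S => w ⟨0, h0⟩ = x),
      pathVal a r m (n+1) w) = ∑ v : Fin n → S, pathVal a r m (n+1) (Fin.cons x v) := by
    refine Finset.sum_bij' (fun w _ => Fin.tail w) (fun v _ => Fin.cons x v) ?_ ?_ ?_ ?_ ?_
    · intro w hw; exact Finset.mem_univ _
    · intro v _; simp only [Finset.mem_filter, Finset.mem_univ, true_and]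
      rfl
    · intro w hw
      rw [Finset.mem_filter] at hw
      show Fin.cons x (Fin.tail w) = w
      rw [← hw.2]; exact Fin.cons_self_tail w
    · intro v _; rfl
    · intro w hw
      rw [Finset.mem_filter] at hw
      have hcw : Fin.cons x (Fin.tail w) = w := by
        rw [← hw.2]; exact Fin.cons_self_tail w
      show pathVal a r m (n+1) w = pathVal a r m (n+1) (Fin.cons x (Fin.tail w))
      rw [hcw]
  rw [hsum]
  have : ∀ v : Fin n → S, pathVal a r m (n+1) (Fin.cons x v)
      = r (m+1) x * (a x (v ⟨0, hn⟩) * pathVal a r (m+1) n v) :=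
    fun v => pathVal_cons a r hn m x v
  rw [Finset.sum_congr rfl fun v _ => this v, ← Finset.mul_sum]
  congr 1
  rw [← Finset.sum_fiberwise (g := fun v : Fin n → S => v ⟨0, hn⟩) (s := Finset.univ)
    (f := fun v => a x (v ⟨0, hn⟩) * pathVal a r (m+1) n v)]
  refine Finset.sum_congr rfl fun y _ => ?_
  rw [q, dif_pos hn, Finset.mul_sum]
  refine Finset.sum_congr rfl fun v hv => ?_
  rw [Finset.mem_filter] at hv
  rw [hv.2]

lemma pathVal_nonneg (a : S → S → ℝ) (ha : ∀ x y, 0 ≤ a x y)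
    (r : ℕ → S → ℝ) (hr : ∀ i x, 0 ≤ r i x) (m n : ℕ) (t : Fin n → S) :
    0 ≤ pathVal a r m n t := by
  unfold pathVal
  apply mul_nonneg
  · exact Finset.prod_nonneg fun i _ => hr _ _
  · refine Finset.prod_nonneg fun i _ => ?_
    split
    · exact ha _ _
    · exact zero_le_one

lemma q_nonneg (a : S → S → ℝ) (ha : ∀ x y, 0 ≤ a x y)
    (r : ℕ → S → ℝ) (hr : ∀ i x, 0 ≤ r i x) (m n : ℕ) (x : S) :
    0 ≤ q a r m n x := by
  classical
  unfold q
  split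
  · exact Finset.sum_nonneg fun t _ => pathVal_nonneg a ha r hr m n t
  · exact le_refl 0

lemma q_le_Q [Nonempty S] (a : S → S → ℝ) (r : ℕ → S → ℝ) (m n : ℕ) (x : S) :
    q a r m n x ≤ Q a r m n :=
  Finset.le_sup' _ (Finset.mem_univ x)

lemma Q_nonneg [Nonempty S] (a : S → S → ℝ) (ha : ∀ x y, 0 ≤ a x y)
    (r : ℕ → S → ℝ) (hr : ∀ i x, 0 ≤ r i x) (m n : ℕ) :
    0 ≤ Q a r m n :=
  le_trans (q_nonneg a ha r hr m n (Classical.arbitrary S)) (q_le_Q a r m n _)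

lemma q_key [Nonempty S] (a : S → S → ℝ) (ha : ∀ x y, 0 ≤ a x y)
    (ha1 : ∀ x, ∑ y : S, a x y = 1) (r : ℕ → S → ℝ) (hr : ∀ i x, 0 ≤ r i x) :
    ∀ n m t x, 1 ≤ t →
      q a r m (n + 1 + t) x ≤ q a r m (n + 1) x * Q a r (m + (n + 1)) t := by
  intro n
  induction n with
  | zero =>
    intro m t x ht
    have h1 : 0 + 1 + t = t + 1 := by omega
    rw [h1, q_succ a r (by omega : 0 < t) m x, q_one a r m x]
    refine mul_le_mul_of_nonneg_left ?_ (hr _ _)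
    calc ∑ y : S, a x y * q a r (m + 1) t y
        ≤ ∑ y : S, a x y * Q a r (m + 1) t := by
          refine Finset.sum_le_sum fun y _ => ?_
          exact mul_le_mul_of_nonneg_left (q_le_Q a r (m+1) t y) (ha x y)
      _ = Q a r (m + 1) t := by rw [← Finset.sum_mul, ha1 x, one_mul]
      _ = Q a r (m + (0 + 1)) t := by norm_num
  | succ n ih =>
    intro m t x ht
    have h1 : n + 1 + 1 + t = (n + 1 + t) + 1 := by omega
    rw [h1, q_succ a r (by omega : 0 < n + 1 + t) m x]
    have h2 : q a r m (n + 1 + 1) x = r (m + 1) x * ∑ y : S, a x y * q a r (m + 1) (n + 1) y :=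
      q_succ a r (by omega) m x
    have h3 : ∀ y : S, a x y * q a r (m + 1) (n + 1 + t) y
        ≤ a x y * (q a r (m + 1) (n + 1) y * Q a r (m + 1 + (n + 1)) t) := fun y =>
      mul_le_mul_of_nonneg_left (ih (m + 1) t y ht) (ha x y)
    calc r (m + 1) x * ∑ y : S, a x y * q a r (m + 1) (n + 1 + t) y
        ≤ r (m + 1) x * ∑ y : S, a x y * (q a r (m + 1) (n + 1) y * Q a r (m + 1 + (n + 1)) t) :=
          mul_le_mul_of_nonneg_left (Finset.sum_le_sum fun y _ => h3 y) (hr _ _)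
      _ = (r (m + 1) x * ∑ y : S, a x y * q a r (m + 1) (n + 1) y) * Q a r (m + 1 + (n + 1)) t := by
          rw [Finset.sum_congr rfl fun y _ => (mul_assoc (a x y) _ _).symm, ← Finset.sum_mul]
          ring
      _ = q a r m (n + 1 + 1) x * Q a r (m + (n + 1 + 1)) t := by
          rw [← h2, show m + 1 + (n + 1) = m + (n + 1 + 1) from by omega]

end Aux

theorem Q_submultiplicative {S : Type*} [Fintype S] [Nonempty S]
    (a : S → S → ℝ) (ha : ∀ x y, 0 ≤ a x y) (ha1 : ∀ x, ∑ y : S, a x y = 1)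
    (r : ℕ → S → ℝ) (hr : ∀ i x, 0 ≤ r i x) :
    ∀ s t : ℕ, 1 ≤ s → 1 ≤ t → Q a r 0 (s + t) ≤ Q a r 0 s * Q a r s t := by
  intro s t hs ht
  obtain ⟨n, rfl⟩ : ∃ n, s = n + 1 := ⟨s - 1, by omega⟩
  rw [Q]
  refine Finset.sup'_le _ _ fun x _ => ?_
  calc q a r 0 (n + 1 + t) x ≤ q a r 0 (n + 1) x * Q a r (0 + (n + 1)) t :=
        q_key a ha ha1 r hr n 0 t x ht
    _ ≤ Q a r 0 (n + 1) * Q a r (n + 1) t := by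
        rw [Nat.zero_add]
        exact mul_le_mul_of_nonneg_right (q_le_Q a r 0 (n+1) x) (Q_nonneg a ha r hr (n+1) t)
end

section
/- Suppose that for every probability vector c on S, the mixture density z ↦ ∑_{x∈S} c(x)·f(x)(z) is NOT ν-almost everywhere equal to f₀. Then for every integer k ≥ 1 and every probability vector p on S^k, the trajectory-mixture density (z₁,…,z_k) ↦ ∑_{(x_1,…,x_k)∈S^k} p(x_1,…,x_k)·∏_{i=1}^{k} f(x_i)(z_i) is NOT ν^k-almost everywhere equal to (z₁,…,z_k) ↦ ∏_{i=1}^{k} f₀(z_i), where ν^k denotes the k-fold product measure on 𝒵^k. -/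
/-!
Integrating out all coordinates but the first of ν^k: since every `f x` integrates to one, the
trajectory mixture with weights `p` becomes the one-step mixture whose weights are the law of the
first coordinate under `p`, while `∏ i, f₀ (z i)` becomes `f₀`. By Fubini an a.e. equality on
`𝒵^k` therefore yields, for ν-a.e. first coordinate, an a.e. equality of these marginals, i.e. a
one-step mixture equal to `f₀` ν-a.e.
-/

open MeasureTheory Finset

namespace MeasureTheory

theorem ae_ae_cons_of_ae_pi {n : ℕ} {α : Fin (n + 1) → Type*} [∀ i, MeasurableSpace (α i)]
    {μ : ∀ i, Measure (α i)} [∀ i, SigmaFinite (μ i)] {P : (∀ i, α i) → Prop}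
    (h : ∀ᵐ x ∂Measure.pi μ, P x) :
    ∀ᵐ a ∂μ 0, ∀ᵐ y ∂Measure.pi (fun j => μ j.succ), P (Fin.cons a y) := by
  have := Measure.ae_ae_of_ae_prod
    ((measurePreserving_piFinSuccAbove μ 0).symm.quasiMeasurePreserving.ae h)
  simp only [MeasurableEquiv.piFinSuccAbove_symm_apply, Fin.insertNthEquiv, Equiv.coe_fn_mk,
    Fin.insertNth_zero] at this
  exact this

theorem integral_prod_cons {𝕜 : Type*} [RCLike 𝕜] {n : ℕ} {E : Fin (n + 1) → Type*}
    [∀ i, MeasurableSpace (E i)] {μ : ∀ i, Measure (E i)} [∀ i, SigmaFinite (μ i)]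
    (g : ∀ i, E i → 𝕜) (a : E 0) :
    ∫ y, ∏ i, g i ((Fin.cons a y : ∀ i, E i) i) ∂Measure.pi (fun j : Fin n => μ j.succ)
      = g 0 a * ∏ j : Fin n, ∫ z, g j.succ z ∂μ j.succ := by
  simp only [Fin.prod_univ_succ, Fin.cons_zero, Fin.cons_succ]
  rw [integral_const_mul, integral_fintype_prod_eq_prod]

end MeasureTheory

section Mixture

variable {S : Type*} [Fintype S] {n : ℕ}

section HeadMarginal

variable [DecidableEq S]

def headMarginal (p : (Fin (n + 1) → S) → ℝ) (x : S) : ℝ :=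
  ∑ t with t 0 = x, p t

theorem headMarginal_nonneg {p : (Fin (n + 1) → S) → ℝ} (hp : ∀ t, 0 ≤ p t) (x : S) :
    0 ≤ headMarginal p x :=
  sum_nonneg fun t _ => hp t

theorem sum_headMarginal_mul (p : (Fin (n + 1) → S) → ℝ) (g : S → ℝ) :
    ∑ x, headMarginal p x * g x = ∑ t, p t * g (t 0) := by
  simp only [headMarginal, sum_mul]
  rw [← sum_fiberwise univ (fun t : Fin (n + 1) → S => t 0)]
  refine sum_congr rfl fun x _ => sum_congr rfl fun t ht => ?_
  rw [(mem_filter.1 ht).2]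

theorem sum_headMarginal (p : (Fin (n + 1) → S) → ℝ) : ∑ x, headMarginal p x = ∑ t, p t := by
  simpa using sum_headMarginal_mul p 1

end HeadMarginal

theorem integral_mixture_cons {𝒵 : Type*} [MeasurableSpace 𝒵] {ν : Measure 𝒵} [SigmaFinite ν]
    (p : (Fin (n + 1) → S) → ℝ) {f : S → 𝒵 → ℝ} (hf : ∀ x, ∫ z, f x z ∂ν = 1) (a : 𝒵) :
    ∫ y, ∑ t, p t * ∏ i, f (t i) ((Fin.cons a y : Fin (n + 1) → 𝒵) i) ∂Measure.pi (fun _ => ν)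
      = ∑ t, p t * f (t 0) a := by
  rw [integral_finsetSum]
  · refine sum_congr rfl fun t _ => ?_
    rw [integral_const_mul, integral_prod_cons (μ := fun _ => ν) (fun i => f (t i))]
    simp [hf]
  · intro t _
    simp only [Fin.prod_univ_succ, Fin.cons_zero, Fin.cons_succ]
    exact ((Integrable.fintype_prod fun j => integrable_of_integral_eq_one (hf _)).const_mul
      _).const_mul _

end Mixture

theorem trajectory_mixture_not_ae_eq_general {𝒵 : Type*} [MeasurableSpace 𝒵]
    (ν : Measure 𝒵) [SigmaFinite ν]
    {S : Type*} [Fintype S]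
    (f : S → 𝒵 → ℝ)
    (hfint : ∀ x, ∫ z, f x z ∂ν = 1)
    (f₀ : 𝒵 → ℝ)
    (hf₀int : ∫ z, f₀ z ∂ν = 1)
    (hmix : ∀ c : S → ℝ, (∀ x, 0 ≤ c x) → ∑ x : S, c x = 1 →
      ¬ ((fun z => ∑ x : S, c x * f x z) =ᵐ[ν] f₀)) :
    ∀ k : ℕ, 1 ≤ k → ∀ p : (Fin k → S) → ℝ, (∀ t, 0 ≤ p t) → ∑ t, p t = 1 →
      ¬ ((fun z : Fin k → 𝒵 => ∑ t : Fin k → S, p t * ∏ i, f (t i) (z i))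
          =ᵐ[Measure.pi fun _ : Fin k => ν] fun z => ∏ i, f₀ (z i)) := by
  classical
  rintro k hk p hp hp_sum h
  obtain ⟨n, rfl⟩ := Nat.exists_eq_add_of_le' hk
  refine hmix (headMarginal p) (headMarginal_nonneg hp) (sum_headMarginal p ▸ hp_sum) ?_
  filter_upwards [ae_ae_cons_of_ae_pi h] with a ha
  have marginals_eq := integral_congr_ae ha
  rw [integral_mixture_cons p hfint, integral_prod_cons (μ := fun _ => ν) (fun _ => f₀)]
    at marginals_eq
  simpa [sum_headMarginal_mul, hf₀int] using marginals_eq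

theorem trajectory_mixture_not_ae_eq {𝒵 : Type*} [MeasurableSpace 𝒵]
    (ν : Measure 𝒵) [SigmaFinite ν]
    {S : Type*} [Fintype S] [Nonempty S]
    (f : S → 𝒵 → ℝ) (hfmeas : ∀ x, Measurable (f x)) (hfnonneg : ∀ x z, 0 ≤ f x z)
    (hfint : ∀ x, ∫ z, f x z ∂ν = 1)
    (f₀ : 𝒵 → ℝ) (hf₀meas : Measurable f₀) (hf₀nonneg : ∀ z, 0 ≤ f₀ z)
    (hf₀int : ∫ z, f₀ z ∂ν = 1)
    (hmix : ∀ c : S → ℝ, (∀ x, 0 ≤ c x) → ∑ x : S, c x = 1 →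
      ¬ ((fun z => ∑ x : S, c x * f x z) =ᵐ[ν] f₀)) :
    ∀ k : ℕ, 1 ≤ k → ∀ p : (Fin k → S) → ℝ, (∀ t, 0 ≤ p t) → ∑ t, p t = 1 →
      ¬ ((fun z : Fin k → 𝒵 => ∑ t : Fin k → S, p t * ∏ i, f (t i) (z i))
          =ᵐ[Measure.pi fun _ : Fin k => ν] fun z => ∏ i, f₀ (z i)) :=
  trajectory_mixture_not_ae_eq_general ν f hfint f₀ hf₀int hmix
end
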